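/- Let s < 0 and ε > 0. Then there exists a constant C > 0 (depending only on s and ε) such that for all sequences a, b : ℤ → ℂ, the commutator sequence C₀(k) := Σ_{k'∈ℤ} (⟨k⟩^s − ⟨k'⟩^s) · (i k') · a(k−k') · b(k') satisfies ‖C₀‖_{ℓ²} ≤ C ‖a‖_{ℓ²_{3/2+ε}} ‖b‖_{ℓ²}. (This is the Fourier-coefficient form of the negative-regularity commutator estimate ‖[⟨D⟩^s, f]∂ₓg‖_{L²(𝕋)} ≲ ‖f‖_{H^{3/2+ε}}‖g‖_{L²}.) -/

import Mathlib

open scoped ENNReal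

/-- Japanese bracket `⟨k⟩ = (1 + k²)^(1/2)` for an integer `k`. -/
noncomputable def jb (k : ℤ) : ℝ := Real.sqrt (1 + (k : ℝ) ^ 2)

/-- Weighted `ℓ²_s` norm of a sequence `a : ℤ → ℂ`, valued in `[0,∞]`. -/
noncomputable def l2 (s : ℝ) (a : ℤ → ℂ) : ℝ≥0∞ :=
  (∑' k : ℤ, ENNReal.ofReal (jb k ^ (2 * s) * ‖a k‖ ^ 2)) ^ (1 / 2 : ℝ)

lemma jb_one_le (k : ℤ) : 1 ≤ jb k := by
  have := Real.sqrt_le_sqrt (show (1:ℝ) ≤ 1 + (k:ℝ)^2 by nlinarith [sq_nonneg ((k:ℝ))])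
  simpa [jb] using this

lemma jb_pos (k : ℤ) : 0 < jb k := lt_of_lt_of_le one_pos (jb_one_le k)

lemma abs_le_jb (k : ℤ) : |(k:ℝ)| ≤ jb k := by
  rw [jb, ← Real.sqrt_sq_eq_abs]
  exact Real.sqrt_le_sqrt (by nlinarith)

lemma jb_lipschitz (k k' : ℤ) : |jb k - jb k'| ≤ |(k:ℝ) - (k':ℝ)| := by
  set x := (k:ℝ); set y := (k':ℝ)
  have hu : 0 < jb k := jb_pos k
  have hv : 0 < jb k' := jb_pos k'
  have hu2 : jb k ^ 2 = 1 + x ^ 2 := Real.sq_sqrt (by positivity)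
  have hv2 : jb k' ^ 2 = 1 + y ^ 2 := Real.sq_sqrt (by positivity)
  have key : |jb k - jb k'| * (jb k + jb k') = |x - y| * |x + y| := by
    rw [← abs_mul, ← abs_of_pos (show (0:ℝ) < jb k + jb k' by linarith), ← abs_mul]
    congr 1; nlinarith
  have hxy : |x + y| ≤ jb k + jb k' := by
    calc |x + y| ≤ |x| + |y| := abs_add_le _ _
    _ ≤ jb k + jb k' := add_le_add (abs_le_jb k) (abs_le_jb k')
  have := mul_le_mul_of_nonneg_left hxy (abs_nonneg (x - y))
  rw [← key] at this
  exact le_of_mul_le_mul_right this (by linarith)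

lemma rpow_neg_sub_le {t : ℝ} (ht : 0 < t) {u v : ℝ} (hu : 1 ≤ u) (huv : u ≤ v) :
    u ^ (-t) - v ^ (-t) ≤ t / u * (v - u) := by
  have hu0 : (0:ℝ) < u := lt_of_lt_of_le one_pos hu
  have key : ∀ x ∈ Set.Icc u v, HasDerivWithinAt (fun y : ℝ => y ^ (-t))
      (-t * x ^ (-t - 1)) (Set.Icc u v) x := by
    intro x hx
    have hx0 : x ≠ 0 := ne_of_gt (lt_of_lt_of_le hu0 hx.1)
    simpa [mul_comm] using
      (Real.hasDerivAt_rpow_const (p := -t) (Or.inl hx0)).hasDerivWithinAt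
  have bound : ∀ x ∈ Set.Icc u v, ‖-t * x ^ (-t - 1)‖ ≤ t / u := by
    intro x hx
    have hx0 : (0:ℝ) < x := lt_of_lt_of_le hu0 hx.1
    have h1 : x ^ (-t - 1) ≤ u ^ (-t - 1) :=
      Real.rpow_le_rpow_of_nonpos hu0 hx.1 (by linarith)
    have h2 : u ^ (-t - 1) ≤ u ^ (-1 : ℝ) :=
      Real.rpow_le_rpow_of_exponent_le hu (by linarith)
    have h3 : u ^ (-1 : ℝ) = u⁻¹ := by
      rw [Real.rpow_neg_one]
    have h4 : (0:ℝ) ≤ x ^ (-t - 1) := (Real.rpow_pos_of_pos hx0 _).le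
    rw [norm_mul, norm_neg, Real.norm_eq_abs, Real.norm_eq_abs,
      abs_of_pos ht, abs_of_nonneg h4, div_eq_mul_inv]
    have := le_trans h1 (le_trans h2 (le_of_eq h3))
    exact mul_le_mul_of_nonneg_left this ht.le
  have := (convex_Icc u v).norm_image_sub_le_of_norm_hasDerivWithin_le key bound
    (Set.left_mem_Icc.2 huv) (Set.right_mem_Icc.2 huv)
  rw [Real.norm_eq_abs, Real.norm_eq_abs] at this
  have h5 : u ^ (-t) - v ^ (-t) ≤ |v ^ (-t) - u ^ (-t)| := by
    rw [abs_sub_comm]; exact le_abs_self _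
  have h6 : |v - u| = v - u := abs_of_nonneg (by linarith)
  calc u ^ (-t) - v ^ (-t) ≤ |v ^ (-t) - u ^ (-t)| := h5
    _ ≤ t / u * |v - u| := this
    _ = t / u * (v - u) := by rw [h6]

lemma rpow_neg_abs_sub_le {t : ℝ} (ht : 0 < t) {u v : ℝ} (hu : 1 ≤ u) (hv : 1 ≤ v) :
    |u ^ (-t) - v ^ (-t)| ≤ t / min u v * |u - v| := by
  rcases le_total u v with h | h
  · have h1 : v ^ (-t) ≤ u ^ (-t) :=
      Real.rpow_le_rpow_of_nonpos (lt_of_lt_of_le one_pos hu) h (by linarith)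
    rw [min_eq_left h, abs_of_nonneg (by linarith), abs_of_nonpos (by linarith : u - v ≤ 0)]
    have := rpow_neg_sub_le ht hu h
    linarith [this]
  · have h1 : u ^ (-t) ≤ v ^ (-t) :=
      Real.rpow_le_rpow_of_nonpos (lt_of_lt_of_le one_pos hv) h (by linarith)
    rw [min_eq_right h, abs_of_nonpos (by linarith : u ^ (-t) - v ^ (-t) ≤ 0),
      abs_of_nonneg (by linarith : (0:ℝ) ≤ u - v)]
    have := rpow_neg_sub_le ht hv h
    linarith [this]

lemma kernel_bound {s : ℝ} (hs : s < 0) (k k' : ℤ) :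
    |jb k ^ s - jb k' ^ s| * |(k' : ℝ)| ≤ (2 * (-s) + 4) * jb (k - k') := by
  have ht : 0 < -s := by linarith
  have hcast : (k:ℝ) - (k':ℝ) = ((k - k' : ℤ) : ℝ) := by push_cast; ring
  have hjbm : |(k:ℝ) - (k':ℝ)| ≤ jb (k - k') := by rw [hcast]; exact abs_le_jb _
  have hjbm0 : 0 < jb (k - k') := jb_pos _
  rcases le_or_gt |(k':ℝ)| (2 * |(k:ℝ) - (k':ℝ)|) with hc | hc
  · have h1 : jb k ^ s ≤ 1 := Real.rpow_le_one_of_one_le_of_nonpos (jb_one_le k) hs.le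
    have h2 : jb k' ^ s ≤ 1 := Real.rpow_le_one_of_one_le_of_nonpos (jb_one_le k') hs.le
    have h3 : 0 ≤ jb k ^ s := (Real.rpow_pos_of_pos (jb_pos k) _).le
    have h4 : 0 ≤ jb k' ^ s := (Real.rpow_pos_of_pos (jb_pos k') _).le
    have hd : |jb k ^ s - jb k' ^ s| ≤ 2 := abs_le.mpr ⟨by linarith, by linarith⟩
    calc |jb k ^ s - jb k' ^ s| * |(k':ℝ)|
        ≤ 2 * (2 * |(k:ℝ) - (k':ℝ)|) := mul_le_mul hd hc (abs_nonneg _) (by norm_num)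
      _ ≤ 4 * jb (k - k') := by linarith
      _ ≤ (2 * (-s) + 4) * jb (k - k') := by nlinarith
  · have hk : |(k':ℝ)| / 2 ≤ |(k:ℝ)| := by
      have h7 := abs_sub_abs_le_abs_sub (k':ℝ) (k:ℝ)
      rw [abs_sub_comm] at h7
      linarith
    set m := min (jb k) (jb k') with hm
    have hm1 : 1 ≤ m := le_min (jb_one_le k) (jb_one_le k')
    have hm0 : 0 < m := lt_of_lt_of_le one_pos hm1
    have hmk : |(k':ℝ)| / 2 ≤ m :=
      le_min (le_trans hk (abs_le_jb k)) (by linarith [abs_le_jb k', abs_nonneg ((k':ℝ))])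
    have hdiff : |jb k ^ s - jb k' ^ s| ≤ (-s) / m * |jb k - jb k'| := by
      have := rpow_neg_abs_sub_le ht (jb_one_le k) (jb_one_le k')
      rwa [neg_neg] at this
    have hdm : |(k':ℝ)| / m ≤ 2 := by
      rw [div_le_iff₀ hm0]; linarith
    calc |jb k ^ s - jb k' ^ s| * |(k':ℝ)|
        ≤ ((-s) / m * |jb k - jb k'|) * |(k':ℝ)| :=
          mul_le_mul_of_nonneg_right hdiff (abs_nonneg _)
      _ = (-s) * |jb k - jb k'| * (|(k':ℝ)| / m) := by ring
      _ ≤ (-s) * |(k:ℝ) - (k':ℝ)| * 2 := by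
          apply mul_le_mul _ hdm (by positivity) (by positivity)
          exact mul_le_mul_of_nonneg_left (jb_lipschitz k k') ht.le
      _ ≤ (2 * (-s)) * jb (k - k') := by nlinarith [abs_nonneg ((k:ℝ) - (k':ℝ))]
      _ ≤ (2 * (-s) + 4) * jb (k - k') := by nlinarith

open MeasureTheory in
lemma tsum_cauchy_schwarz (f g : ℤ → ℝ≥0∞) :
    (∑' i, f i * g i) ≤ (∑' i, f i ^ (2:ℝ)) ^ (1/2:ℝ) * (∑' i, g i ^ (2:ℝ)) ^ (1/2:ℝ) := by
  have hpq : (2:ℝ).HolderConjugate 2 := Real.HolderConjugate.two_two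
  have hf : AEMeasurable f (Measure.count) := measurable_from_top.aemeasurable
  have hg : AEMeasurable g (Measure.count) := measurable_from_top.aemeasurable
  have := ENNReal.lintegral_mul_le_Lp_mul_Lq (μ := Measure.count) hpq hf hg
  simpa [lintegral_count, Pi.mul_apply] using this

lemma ofReal_norm_tsum_le (g : ℤ → ℂ) :
    ENNReal.ofReal ‖∑' i, g i‖ ≤ ∑' i, ENNReal.ofReal ‖g i‖ := by
  by_cases h : Summable g
  · have hn : Summable fun i => ‖g i‖ := summable_norm_iff.mpr h
    calc ENNReal.ofReal ‖∑' i, g i‖ ≤ ENNReal.ofReal (∑' i, ‖g i‖) :=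
        ENNReal.ofReal_le_ofReal (norm_tsum_le_tsum_norm hn)
      _ = ∑' i, ENNReal.ofReal ‖g i‖ :=
        ENNReal.ofReal_tsum_of_nonneg (fun _ => norm_nonneg _) hn
  · rw [tsum_eq_zero_of_not_summable h]
    simp

lemma summable_jb_rpow {c : ℝ} (hc : c < -1) : Summable fun m : ℤ => jb m ^ c := by
  have h1 : Summable fun m : ℤ => |(m:ℝ)| ^ c := by
    have := Real.summable_abs_int_rpow (b := -c) (by linarith)
    simpa using this
  have h2 : Summable fun m : ℤ => (if m = 0 then (1:ℝ) else 0) := by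
    apply summable_of_ne_finset_zero (s := ({0} : Finset ℤ))
    intro m hm
    simp only [Finset.mem_singleton] at hm
    simp [hm]
  apply Summable.of_nonneg_of_le (fun m => (Real.rpow_pos_of_pos (jb_pos m) _).le)
    (fun m => ?_) (h1.add h2)
  rcases eq_or_ne m 0 with rfl | hm
  · have : jb 0 = 1 := by simp [jb]
    simp [this, Real.one_rpow, Real.zero_rpow (by linarith : c ≠ 0)]
  · have hm1 : (1:ℝ) ≤ |(m:ℝ)| := by
      rw [← Int.cast_abs]
      exact_mod_cast Int.one_le_abs hm
    have hle : jb m ^ c ≤ |(m:ℝ)| ^ c :=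
      Real.rpow_le_rpow_of_nonpos (lt_of_lt_of_le one_pos hm1) (abs_le_jb m) (by linarith)
    simp only [hm, if_false, add_zero]
    exact hle

lemma ennreal_half_sq (x : ℝ≥0∞) : (x ^ (1/2:ℝ)) ^ (2:ℝ) = x := by
  rw [← ENNReal.rpow_mul]; norm_num

lemma ennreal_sq_half (x : ℝ≥0∞) : (x ^ (2:ℝ)) ^ (1/2:ℝ) = x := by
  rw [← ENNReal.rpow_mul]; norm_num

lemma ennreal_rpow_two (x : ℝ≥0∞) : x ^ (2:ℝ) = x * x := by
  rw [show (2:ℝ) = ((2:ℕ):ℝ) by norm_num, ENNReal.rpow_natCast, pow_two]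

lemma ennreal_half_mul_half (x y : ℝ≥0∞) : x ^ (1/2:ℝ) * (x ^ (1/2:ℝ) * y) = x * y := by
  rw [← mul_assoc, ← ennreal_rpow_two, ennreal_half_sq]

lemma step_schur (W B : ℤ → ℝ≥0∞) :
    ∑' k : ℤ, (∑' k' : ℤ, W (k - k') * B k') ^ (2:ℝ)
      ≤ (∑' m : ℤ, W m) ^ (2:ℝ) * ∑' k : ℤ, B k ^ (2:ℝ) := by
  have hreindex : ∀ k : ℤ, ∑' k' : ℤ, W (k - k') = ∑' m : ℤ, W m := fun k =>
    Equiv.tsum_eq (Equiv.subLeft k) W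
  have hreindex' : ∀ k' : ℤ, ∑' k : ℤ, W (k - k') = ∑' m : ℤ, W m := fun k' =>
    Equiv.tsum_eq (Equiv.subRight k') W
  have h1 : ∀ k : ℤ, (∑' k' : ℤ, W (k - k') * B k')
      ≤ (∑' m : ℤ, W m) ^ (1/2:ℝ) * (∑' k' : ℤ, W (k - k') * B k' ^ (2:ℝ)) ^ (1/2:ℝ) := by
    intro k
    calc ∑' k' : ℤ, W (k - k') * B k'
        = ∑' k' : ℤ, (W (k - k')) ^ (1/2:ℝ) * ((W (k - k')) ^ (1/2:ℝ) * B k') :=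
          tsum_congr fun k' => (ennreal_half_mul_half _ _).symm
      _ ≤ (∑' k' : ℤ, ((W (k - k')) ^ (1/2:ℝ)) ^ (2:ℝ)) ^ (1/2:ℝ) *
            (∑' k' : ℤ, ((W (k - k')) ^ (1/2:ℝ) * B k') ^ (2:ℝ)) ^ (1/2:ℝ) :=
          tsum_cauchy_schwarz _ _
      _ = (∑' m : ℤ, W m) ^ (1/2:ℝ) * (∑' k' : ℤ, W (k - k') * B k' ^ (2:ℝ)) ^ (1/2:ℝ) := by
          rw [show (∑' k' : ℤ, ((W (k - k')) ^ (1/2:ℝ)) ^ (2:ℝ)) = ∑' k' : ℤ, W (k - k') from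
              tsum_congr fun k' => ennreal_half_sq _,
            hreindex k,
            show (∑' k' : ℤ, ((W (k - k')) ^ (1/2:ℝ) * B k') ^ (2:ℝ))
                = ∑' k' : ℤ, W (k - k') * B k' ^ (2:ℝ) from
              tsum_congr fun k' => by
                rw [ENNReal.mul_rpow_of_nonneg _ _ (by norm_num : (0:ℝ) ≤ 2), ennreal_half_sq]]
  have h2 : ∑' k : ℤ, ∑' k' : ℤ, W (k - k') * B k' ^ (2:ℝ)
      = (∑' m : ℤ, W m) * ∑' k : ℤ, B k ^ (2:ℝ) := by
    rw [ENNReal.tsum_comm]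
    calc ∑' k' : ℤ, ∑' k : ℤ, W (k - k') * B k' ^ (2:ℝ)
        = ∑' k' : ℤ, (∑' k : ℤ, W (k - k')) * B k' ^ (2:ℝ) :=
          tsum_congr fun k' => ENNReal.tsum_mul_right
      _ = ∑' k' : ℤ, (∑' m : ℤ, W m) * B k' ^ (2:ℝ) :=
          tsum_congr fun k' => by rw [hreindex' k']
      _ = (∑' m : ℤ, W m) * ∑' k : ℤ, B k ^ (2:ℝ) := ENNReal.tsum_mul_left
  calc ∑' k : ℤ, (∑' k' : ℤ, W (k - k') * B k') ^ (2:ℝ)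
      ≤ ∑' k : ℤ, ((∑' m : ℤ, W m) ^ (1/2:ℝ) *
          (∑' k' : ℤ, W (k - k') * B k' ^ (2:ℝ)) ^ (1/2:ℝ)) ^ (2:ℝ) :=
        ENNReal.tsum_le_tsum fun k => ENNReal.rpow_le_rpow (h1 k) (by norm_num)
    _ = ∑' k : ℤ, (∑' m : ℤ, W m) * ∑' k' : ℤ, W (k - k') * B k' ^ (2:ℝ) :=
        tsum_congr fun k => by
          rw [ENNReal.mul_rpow_of_nonneg _ _ (by norm_num : (0:ℝ) ≤ 2),
            ennreal_half_sq, ennreal_half_sq]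
    _ = (∑' m : ℤ, W m) * ∑' k : ℤ, ∑' k' : ℤ, W (k - k') * B k' ^ (2:ℝ) :=
        ENNReal.tsum_mul_left
    _ = (∑' m : ℤ, W m) * ((∑' m : ℤ, W m) * ∑' k : ℤ, B k ^ (2:ℝ)) := by rw [h2]
    _ = (∑' m : ℤ, W m) ^ (2:ℝ) * ∑' k : ℤ, B k ^ (2:ℝ) := by
        rw [ennreal_rpow_two, mul_assoc]

lemma step_pointwise {s : ℝ} (hs : s < 0) (a b : ℤ → ℂ) (k : ℤ) :
    ENNReal.ofReal ‖∑' k' : ℤ,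
        Complex.ofReal (jb k ^ s - jb k' ^ s) * (Complex.I * (k' : ℂ)) * a (k - k') * b k'‖
      ≤ ENNReal.ofReal (2 * (-s) + 4) *
        ∑' k' : ℤ, ENNReal.ofReal (jb (k - k') * ‖a (k - k')‖) * ENNReal.ofReal ‖b k'‖ := by
  have hK : (0:ℝ) < 2 * (-s) + 4 := by linarith
  refine le_trans (ofReal_norm_tsum_le _) ?_
  rw [← ENNReal.tsum_mul_left]
  refine ENNReal.tsum_le_tsum fun k' => ?_
  have hn : ‖Complex.ofReal (jb k ^ s - jb k' ^ s) * (Complex.I * (k' : ℂ)) * a (k - k') * b k'‖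
      = (|jb k ^ s - jb k' ^ s| * |(k':ℝ)|) * (‖a (k - k')‖ * ‖b k'‖) := by
    have : ((k' : ℂ)) = (((k' : ℝ) : ℂ)) := by push_cast; ring
    rw [this]
    simp only [norm_mul, Complex.norm_real, Complex.norm_I, Real.norm_eq_abs, one_mul]
    ring
  rw [hn]
  have hb1 : (|jb k ^ s - jb k' ^ s| * |(k':ℝ)|) * (‖a (k - k')‖ * ‖b k'‖)
      ≤ ((2 * (-s) + 4) * jb (k - k')) * (‖a (k - k')‖ * ‖b k'‖) :=
    mul_le_mul_of_nonneg_right (kernel_bound hs k k') (by positivity)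
  refine le_trans (ENNReal.ofReal_le_ofReal hb1) (le_of_eq ?_)
  rw [show (2 * (-s) + 4) * jb (k - k') * (‖a (k - k')‖ * ‖b k'‖)
      = (2 * (-s) + 4) * ((jb (k - k') * ‖a (k - k')‖) * ‖b k'‖) by ring,
    ENNReal.ofReal_mul hK.le, ENNReal.ofReal_mul (mul_nonneg (jb_pos _).le (norm_nonneg _))]

lemma step_sw {ε : ℝ} (hε : 0 < ε) (a : ℤ → ℂ) :
    ∑' m : ℤ, ENNReal.ofReal (jb m * ‖a m‖)
      ≤ (∑' m : ℤ, ENNReal.ofReal (jb m ^ (-(1 + 2 * ε)))) ^ (1/2:ℝ) *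
        (∑' m : ℤ, ENNReal.ofReal (jb m ^ (2 * (3 / 2 + ε)) * ‖a m‖ ^ 2)) ^ (1/2:ℝ) := by
  have key := tsum_cauchy_schwarz
    (fun m => ENNReal.ofReal (jb m ^ ((-(1 + 2 * ε)) / 2)))
    (fun m => ENNReal.ofReal (jb m ^ ((3 + 2 * ε) / 2) * ‖a m‖))
  have h1 : ∀ m : ℤ, ENNReal.ofReal (jb m ^ ((-(1 + 2 * ε)) / 2)) *
      ENNReal.ofReal (jb m ^ ((3 + 2 * ε) / 2) * ‖a m‖) = ENNReal.ofReal (jb m * ‖a m‖) := by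
    intro m
    rw [← ENNReal.ofReal_mul (Real.rpow_pos_of_pos (jb_pos m) _).le, ← mul_assoc,
      ← Real.rpow_add (jb_pos m),
      show (-(1 + 2 * ε)) / 2 + (3 + 2 * ε) / 2 = (1:ℝ) by ring, Real.rpow_one]
  have h2 : ∀ m : ℤ, (ENNReal.ofReal (jb m ^ ((-(1 + 2 * ε)) / 2))) ^ (2:ℝ)
      = ENNReal.ofReal (jb m ^ (-(1 + 2 * ε))) := by
    intro m
    rw [ENNReal.ofReal_rpow_of_nonneg (Real.rpow_pos_of_pos (jb_pos m) _).le
      (by norm_num : (0:ℝ) ≤ 2), ← Real.rpow_mul (jb_pos m).le]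
    norm_num
  have h3 : ∀ m : ℤ, (ENNReal.ofReal (jb m ^ ((3 + 2 * ε) / 2) * ‖a m‖)) ^ (2:ℝ)
      = ENNReal.ofReal (jb m ^ (2 * (3 / 2 + ε)) * ‖a m‖ ^ 2) := by
    intro m
    rw [ENNReal.ofReal_rpow_of_nonneg
      (mul_nonneg (Real.rpow_pos_of_pos (jb_pos m) _).le (norm_nonneg _)) (by norm_num : (0:ℝ) ≤ 2),
      Real.mul_rpow (Real.rpow_pos_of_pos (jb_pos m) _).le (norm_nonneg _),
      ← Real.rpow_mul (jb_pos m).le,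
      show ((3 + 2 * ε) / 2 * 2) = 2 * (3 / 2 + ε) by ring,
      show ‖a m‖ ^ (2:ℝ) = ‖a m‖ ^ (2:ℕ) by
        rw [show (2:ℝ) = ((2:ℕ):ℝ) by norm_num, Real.rpow_natCast]]
  calc ∑' m : ℤ, ENNReal.ofReal (jb m * ‖a m‖)
      = ∑' m : ℤ, ENNReal.ofReal (jb m ^ ((-(1 + 2 * ε)) / 2)) *
          ENNReal.ofReal (jb m ^ ((3 + 2 * ε) / 2) * ‖a m‖) :=
        tsum_congr fun m => (h1 m).symm
    _ ≤ (∑' m : ℤ, (ENNReal.ofReal (jb m ^ ((-(1 + 2 * ε)) / 2))) ^ (2:ℝ)) ^ (1/2:ℝ) *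
          (∑' m : ℤ, (ENNReal.ofReal (jb m ^ ((3 + 2 * ε) / 2) * ‖a m‖)) ^ (2:ℝ)) ^ (1/2:ℝ) := key
    _ = _ := by
        rw [tsum_congr h2, tsum_congr h3]

/-- Negative-regularity commutator estimate (Fourier-coefficient form), `s < 0`:
`‖[⟨D⟩^s, f]∂ₓg‖_{L²} ≲ ‖f‖_{H^{3/2+ε}}‖g‖_{L²}`. -/
theorem commutator_estimate_neg (s ε : ℝ) (hs : s < 0) (hε : 0 < ε) :
    ∃ C : ℝ, 0 < C ∧ ∀ a b : ℤ → ℂ,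
      l2 0 (fun k => ∑' k' : ℤ,
          Complex.ofReal (jb k ^ s - jb k' ^ s) * (Complex.I * (k' : ℂ)) * a (k - k') * b k')
        ≤ ENNReal.ofReal C * (l2 (3 / 2 + ε) a * l2 0 b) := by
  have hK : (0:ℝ) < 2 * (-s) + 4 := by linarith
  have hsum : Summable fun m : ℤ => jb m ^ (-(1 + 2 * ε)) := summable_jb_rpow (by linarith)
  set S : ℝ≥0∞ := ∑' m : ℤ, ENNReal.ofReal (jb m ^ (-(1 + 2 * ε))) with hSdef
  have hS : S ≠ ⊤ := by
    rw [hSdef, ← ENNReal.ofReal_tsum_of_nonneg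
      (fun m => (Real.rpow_pos_of_pos (jb_pos m) _).le) hsum]
    exact ENNReal.ofReal_ne_top
  set D : ℝ≥0∞ := ENNReal.ofReal (2 * (-s) + 4) * S ^ (1/2:ℝ) with hDdef
  have hD : D ≠ ⊤ := ENNReal.mul_ne_top ENNReal.ofReal_ne_top
    (ENNReal.rpow_ne_top_of_nonneg (by norm_num) hS)
  refine ⟨D.toReal + 1, by positivity, fun a b => ?_⟩
  have hDC : D ≤ ENNReal.ofReal (D.toReal + 1) :=
    calc D = ENNReal.ofReal D.toReal := (ENNReal.ofReal_toReal hD).symm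
      _ ≤ _ := ENNReal.ofReal_le_ofReal (by linarith [ENNReal.toReal_nonneg (a := D)])
  have hl2C : l2 0 (fun k => ∑' k' : ℤ,
        Complex.ofReal (jb k ^ s - jb k' ^ s) * (Complex.I * (k' : ℂ)) * a (k - k') * b k')
      = (∑' k : ℤ, (ENNReal.ofReal ‖∑' k' : ℤ,
          Complex.ofReal (jb k ^ s - jb k' ^ s) * (Complex.I * (k' : ℂ)) * a (k - k') * b k'‖)
            ^ (2:ℝ)) ^ (1/2:ℝ) := by
    rw [l2]
    congr 1
    refine tsum_congr fun k => ?_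
    rw [mul_zero, Real.rpow_zero, one_mul,
      show (2:ℝ) = ((2:ℕ):ℝ) by norm_num, ENNReal.rpow_natCast,
      ← ENNReal.ofReal_pow (norm_nonneg _)]
  have hl2b : l2 0 b = (∑' k : ℤ, (ENNReal.ofReal ‖b k‖) ^ (2:ℝ)) ^ (1/2:ℝ) := by
    rw [l2]
    congr 1
    refine tsum_congr fun k => ?_
    rw [mul_zero, Real.rpow_zero, one_mul, show (2:ℝ) = ((2:ℕ):ℝ) by norm_num,
      ENNReal.rpow_natCast, ← ENNReal.ofReal_pow (norm_nonneg _)]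
  have hl2a : l2 (3 / 2 + ε) a
      = (∑' m : ℤ, ENNReal.ofReal (jb m ^ (2 * (3 / 2 + ε)) * ‖a m‖ ^ 2)) ^ (1/2:ℝ) := by
    rw [l2]
  rw [hl2C, hl2b, hl2a]
  set W : ℤ → ℝ≥0∞ := fun m => ENNReal.ofReal (jb m * ‖a m‖) with hW
  set B : ℤ → ℝ≥0∞ := fun k => ENNReal.ofReal ‖b k‖ with hB
  set T : ℝ≥0∞ := ∑' m : ℤ, ENNReal.ofReal (jb m ^ (2 * (3 / 2 + ε)) * ‖a m‖ ^ 2) with hT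
  have hpt : ∀ k : ℤ, ENNReal.ofReal ‖∑' k' : ℤ,
      Complex.ofReal (jb k ^ s - jb k' ^ s) * (Complex.I * (k' : ℂ)) * a (k - k') * b k'‖
      ≤ ENNReal.ofReal (2 * (-s) + 4) * ∑' k' : ℤ, W (k - k') * B k' := by
    intro k
    simpa [hW, hB] using step_pointwise hs a b k
  have hsw : (∑' m : ℤ, W m) ≤ S ^ (1/2:ℝ) * T ^ (1/2:ℝ) := by
    simpa [hW, hSdef, hT] using step_sw hε a
  calc (∑' k : ℤ, (ENNReal.ofReal ‖∑' k' : ℤ,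
        Complex.ofReal (jb k ^ s - jb k' ^ s) * (Complex.I * (k' : ℂ)) * a (k - k') * b k'‖)
          ^ (2:ℝ)) ^ (1/2:ℝ)
      ≤ ((ENNReal.ofReal (2 * (-s) + 4)) ^ (2:ℝ) *
          ((∑' m : ℤ, W m) ^ (2:ℝ) * ∑' k : ℤ, B k ^ (2:ℝ))) ^ (1/2:ℝ) := by
        refine ENNReal.rpow_le_rpow ?_ (by norm_num)
        calc ∑' k : ℤ, (ENNReal.ofReal ‖∑' k' : ℤ,
              Complex.ofReal (jb k ^ s - jb k' ^ s) * (Complex.I * (k' : ℂ)) * a (k - k') * b k'‖)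
                ^ (2:ℝ)
            ≤ ∑' k : ℤ, (ENNReal.ofReal (2 * (-s) + 4) * ∑' k' : ℤ, W (k - k') * B k') ^ (2:ℝ) :=
              ENNReal.tsum_le_tsum fun k => ENNReal.rpow_le_rpow (hpt k) (by norm_num)
          _ = (ENNReal.ofReal (2 * (-s) + 4)) ^ (2:ℝ) *
              ∑' k : ℤ, (∑' k' : ℤ, W (k - k') * B k') ^ (2:ℝ) := by
              rw [← ENNReal.tsum_mul_left]
              exact tsum_congr fun k => by
                rw [ENNReal.mul_rpow_of_nonneg _ _ (by norm_num : (0:ℝ) ≤ 2)]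
          _ ≤ (ENNReal.ofReal (2 * (-s) + 4)) ^ (2:ℝ) *
              ((∑' m : ℤ, W m) ^ (2:ℝ) * ∑' k : ℤ, B k ^ (2:ℝ)) :=
              mul_le_mul_right (step_schur W B) _
    _ = ENNReal.ofReal (2 * (-s) + 4) * (∑' m : ℤ, W m) * (∑' k : ℤ, B k ^ (2:ℝ)) ^ (1/2:ℝ) := by
        rw [ENNReal.mul_rpow_of_nonneg _ _ (by norm_num : (0:ℝ) ≤ 1/2),
          ENNReal.mul_rpow_of_nonneg _ _ (by norm_num : (0:ℝ) ≤ 1/2),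
          ennreal_sq_half, ennreal_sq_half, ← mul_assoc]
    _ ≤ ENNReal.ofReal (2 * (-s) + 4) * (S ^ (1/2:ℝ) * T ^ (1/2:ℝ)) *
          (∑' k : ℤ, B k ^ (2:ℝ)) ^ (1/2:ℝ) :=
        mul_le_mul_left (mul_le_mul_right hsw _) _
    _ = D * (T ^ (1/2:ℝ) * (∑' k : ℤ, B k ^ (2:ℝ)) ^ (1/2:ℝ)) := by
        rw [hDdef]; ring
    _ ≤ ENNReal.ofReal (D.toReal + 1) * (T ^ (1/2:ℝ) * (∑' k : ℤ, B k ^ (2:ℝ)) ^ (1/2:ℝ)) :=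
        mul_le_mul_left hDC _
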